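/- arXiv:math/0701771 — 7 statements merged into one kernel-verified Lean document; each statement's English description precedes it below -/
import Mathlib

section
/- Let M be a planar map with m edges, let α : V → ℕ, and let A be a cycle-free (acyclic) subset of the edges of M. Then the number of orientations of the edges of M in which every vertex v has out-degree exactly α(v) is at most 2^(m−|A|). -/
/-- `D` is an orientation of the simple graph `G`, given as the set of directed
edges: for every edge `{a,b}` of `G` exactly one of `(a,b)`, `(b,a)` belongs to `D`,
and `D` contains only pairs corresponding to edges of `G`. -/
def IsOrient {V : Type*} (G : SimpleGraph V) (D : Finset (V × V)) : Prop :=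
  (∀ p ∈ D, G.Adj p.1 p.2) ∧ ∀ a b : V, G.Adj a b → ((a, b) ∈ D ↔ (b, a) ∉ D)

/-- The out-degree of `v` in the orientation `D`. -/
def outD {V : Type*} [DecidableEq V] (D : Finset (V × V)) (v : V) : ℕ :=
  (D.filter (fun p => p.1 = v)).card

/-!
Two `α`-orientations that agree on every edge outside `A` coincide: the edges on which they
disagree lie in `A`, and at every vertex as many of them leave as enter in the first
orientation, so no vertex meets exactly one of them. A finite forest without leaves has no
edges, hence the orientations agree everywhere. An `α`-orientation is therefore determined by
its restriction to the `m - |A|` edges outside `A`, which leaves at most `2 ^ (m - |A|)` choices.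
-/

namespace SimpleGraph

variable {V : Type*} {G : SimpleGraph V}

lemma IsAcyclic.exists_isPath_cons_length_ge (hG : G.IsAcyclic)
    (h : ∀ ⦃v w⦄, G.Adj v w → ∃ u, G.Adj v u ∧ u ≠ w) {a b : V} (hab : G.Adj a b) (n : ℕ) :
    ∃ (u s v : V) (hus : G.Adj u s) (q : G.Walk s v), (Walk.cons hus q).IsPath ∧ n ≤ q.length := by
  induction n with
  | zero => exact ⟨a, b, b, hab, .nil, by simp [hab.ne], le_rfl⟩
  | succ n ih =>
    obtain ⟨u, s, v, hus, q, hpath, hlen⟩ := ih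
    obtain ⟨t, hut, hts⟩ := h hus
    -- in a forest, the only neighbour of `u` on a path starting at `u` is its second vertex
    have ht : t ∉ (Walk.cons hus q).support := fun hmem =>
      hts (by simpa using hG.eq_snd_of_adj_start hpath hut hmem)
    exact ⟨t, u, v, hut.symm, _, hpath.cons ht, by simpa using hlen⟩

theorem IsAcyclic.eq_bot_of_forall_adj_exists_adj_ne [Finite V] (hG : G.IsAcyclic)
    (h : ∀ ⦃v w⦄, G.Adj v w → ∃ u, G.Adj v u ∧ u ≠ w) : G = ⊥ := by
  have := Fintype.ofFinite V
  ext a b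
  refine ⟨fun hab => ?_, fun hab => hab.elim⟩
  obtain ⟨u, s, v, hus, q, hpath, hlen⟩ :=
    hG.exists_isPath_cons_length_ge h hab (Fintype.card V)
  have := hpath.length_lt
  simp only [Walk.length_cons] at this
  omega

end SimpleGraph

section Orientation

variable {V : Type*} {G : SimpleGraph V} {D₁ D₂ : Finset (V × V)}

lemma IsOrient.swap_mem_sdiff [DecidableEq V] (h₁ : IsOrient G D₁) (h₂ : IsOrient G D₂)
    {p : V × V} (hp : p ∈ D₁ \ D₂) : p.swap ∈ D₂ \ D₁ := by
  rw [Finset.mem_sdiff] at hp ⊢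
  have hadj := h₁.1 p hp.1
  exact ⟨(h₂.2 p.2 p.1 hadj.symm).mpr hp.2, (h₁.2 p.1 p.2 hadj).mp hp.1⟩

lemma IsOrient.mem_iff_mem_of_out_mem_iff (h₁ : IsOrient G D₁) (h₂ : IsOrient G D₂)
    {p : V × V} (hadj : G.Adj p.1 p.2) (hout : s(p.1, p.2).out ∈ D₁ ↔ s(p.1, p.2).out ∈ D₂) :
    p ∈ D₁ ↔ p ∈ D₂ := by
  obtain ⟨q, hq, hq_mem⟩ : ∃ q : V × V, s(q.1, q.2) = s(p.1, p.2) ∧ (q ∈ D₁ ↔ q ∈ D₂) :=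
    ⟨s(p.1, p.2).out, Quot.out_eq _, hout⟩
  rcases Sym2.mk_eq_mk_iff.mp hq with rfl | rfl
  · exact hq_mem
  · rw [h₁.2 _ _ hadj, h₂.2 _ _ hadj]
    exact not_congr hq_mem

lemma exists_mem_sdiff_of_outD_eq [DecidableEq V] {v w : V} (hout : outD D₁ v = outD D₂ v)
    (hvw : (v, w) ∈ D₁ \ D₂) : ∃ u, (v, u) ∈ D₂ \ D₁ := by
  have hcard := Finset.card_sdiff_comm
    (by exact hout : (D₁.filter (·.1 = v)).card = (D₂.filter (·.1 = v)).card)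
  obtain ⟨p, hp⟩ : (D₂.filter (·.1 = v) \ D₁.filter (·.1 = v)).Nonempty := by
    rw [← Finset.card_pos, ← hcard, Finset.card_pos]
    exact ⟨(v, w), by simp_all⟩
  obtain ⟨p₁, p₂⟩ := p
  simp only [Finset.mem_sdiff, Finset.mem_filter, not_and] at hp
  obtain ⟨⟨hp₂, rfl⟩, hp₁⟩ := hp
  exact ⟨p₂, Finset.mem_sdiff.mpr ⟨hp₂, fun h => hp₁ h rfl⟩⟩

def disagreementGraph [DecidableEq V] (D₁ D₂ : Finset (V × V)) : SimpleGraph V :=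
  SimpleGraph.fromRel fun x y => (x, y) ∈ D₁ \ D₂

lemma disagreementGraph_exists_adj_ne [DecidableEq V] (h₁ : IsOrient G D₁)
    (h₂ : IsOrient G D₂) (hout : ∀ v, outD D₁ v = outD D₂ v) {v w : V}
    (hvw : (disagreementGraph D₁ D₂).Adj v w) :
    ∃ u, (disagreementGraph D₁ D₂).Adj v u ∧ u ≠ w := by
  obtain ⟨-, hvw | hwv⟩ := hvw
  · obtain ⟨u, hvu⟩ := exists_mem_sdiff_of_outD_eq (hout v) hvw
    have hne : v ≠ u := (h₂.1 _ (Finset.mem_sdiff.mp hvu).1).ne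
    refine ⟨u, ⟨hne, Or.inr (h₂.swap_mem_sdiff h₁ hvu)⟩, ?_⟩
    rintro rfl
    exact (Finset.mem_sdiff.mp hvw).2 (Finset.mem_sdiff.mp hvu).1
  · have hvw := h₁.swap_mem_sdiff h₂ hwv
    obtain ⟨u, hvu⟩ := exists_mem_sdiff_of_outD_eq (hout v).symm hvw
    have hne : v ≠ u := (h₁.1 _ (Finset.mem_sdiff.mp hvu).1).ne
    refine ⟨u, ⟨hne, Or.inl hvu⟩, ?_⟩
    rintro rfl
    exact (Finset.mem_sdiff.mp hvw).2 (Finset.mem_sdiff.mp hvu).1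

lemma IsOrient.eq_of_outD_eq_of_mem_iff_mem [Finite V] [DecidableEq V] {A : Set (Sym2 V)}
    (hA : (SimpleGraph.fromEdgeSet A).IsAcyclic) (h₁ : IsOrient G D₁) (h₂ : IsOrient G D₂)
    (hout : ∀ v, outD D₁ v = outD D₂ v)
    (hagree : ∀ p : V × V, s(p.1, p.2) ∉ A → (p ∈ D₁ ↔ p ∈ D₂)) : D₁ = D₂ := by
  have hle : disagreementGraph D₁ D₂ ≤ SimpleGraph.fromEdgeSet A := by
    rintro x y ⟨hxy, hd⟩
    refine ⟨by_contra fun hxyA => ?_, hxy⟩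
    have hyxA : s(y, x) ∉ A := by rwa [Sym2.eq_swap]
    rcases hd with hd | hd <;> rw [Finset.mem_sdiff] at hd
    · exact hd.2 ((hagree (x, y) hxyA).mp hd.1)
    · exact hd.2 ((hagree (y, x) hyxA).mp hd.1)
  have hbot : disagreementGraph D₁ D₂ = ⊥ :=
    (hA.anti hle).eq_bot_of_forall_adj_exists_adj_ne
      fun _ _ => disagreementGraph_exists_adj_ne h₁ h₂ hout
  have hempty : ∀ p, p ∉ D₁ \ D₂ := fun p hp => by
    have hadj : (disagreementGraph D₁ D₂).Adj p.1 p.2 :=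
      ⟨(h₁.1 p (Finset.mem_sdiff.mp hp).1).ne, Or.inl hp⟩
    simp [hbot] at hadj
  refine subset_antisymm (Finset.sdiff_eq_empty_iff_subset.mp ?_)
    (Finset.sdiff_eq_empty_iff_subset.mp ?_)
  · exact Finset.eq_empty_of_forall_notMem hempty
  · exact Finset.eq_empty_of_forall_notMem fun p hp =>
      by simpa using hempty p.swap (h₂.swap_mem_sdiff h₁ hp)

end Orientation

/-- If `A` is a cycle-free subset of the edges of a graph `M` with `m` edges, then the
number of `α`-orientations of `M` is at most `2 ^ (m - |A|)`. -/
theorem alpha_orientations_le_of_acyclic_subset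
    {V : Type*} [Fintype V] [DecidableEq V]
    (G : SimpleGraph V) [DecidableRel G.Adj] (α : V → ℕ)
    (A : Finset (Sym2 V)) (hA : A ⊆ G.edgeFinset)
    (hacyc : (SimpleGraph.fromEdgeSet (A : Set (Sym2 V))).IsAcyclic) :
    {D : Finset (V × V) | IsOrient G D ∧ ∀ v, outD D v = α v}.ncard ≤
      2 ^ (G.edgeFinset.card - A.card) := by
  set B := G.edgeFinset \ A
  -- record, for each edge outside `A`, whether `D` contains its chosen representative `e.out`
  let restrict : Finset (V × V) → Finset (Sym2 V) := fun D => B.filter (·.out ∈ D)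
  have hinj : Set.InjOn restrict {D | IsOrient G D ∧ ∀ v, outD D v = α v} := by
    rintro D₁ ⟨h₁, hα₁⟩ D₂ ⟨h₂, hα₂⟩ heq
    refine h₁.eq_of_outD_eq_of_mem_iff_mem hacyc h₂ (fun v => (hα₁ v).trans (hα₂ v).symm)
      fun p hpA => ?_
    by_cases hadj : G.Adj p.1 p.2
    · have hB : s(p.1, p.2) ∈ B := Finset.mem_sdiff.mpr ⟨by simpa using hadj, hpA⟩
      exact h₁.mem_iff_mem_of_out_mem_iff h₂ hadj
        (by simpa [restrict, hB] using Finset.ext_iff.mp heq s(p.1, p.2))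
    · exact iff_of_false (fun hp => hadj (h₁.1 p hp)) (fun hp => hadj (h₂.1 p hp))
  calc _ ≤ (B.powerset : Set (Finset (Sym2 V))).ncard :=
        Set.ncard_le_ncard_of_injOn restrict
          (fun D _ => Finset.mem_powerset.mpr (Finset.filter_subset _ _)) hinj
          (Finset.finite_toSet _)
    _ = 2 ^ (G.edgeFinset.card - A.card) := by
        rw [Set.ncard_coe_finset, Finset.card_powerset, Finset.card_sdiff_of_subset hA]
end

section
/- Let G be a connected simple graph on n vertices with m edges and α : V → ℕ. Then the number of α-orientations of G is at most 2^(m−n+1). -/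
/-!
Two α-orientations `D₁`, `D₂` of `G` that agree off a forest `H` coincide: the arcs of
`D₁ \ D₂` lie in `H`, and at every vertex as many of them leave as enter (reversing an arc of
`D₁ \ D₂` gives one of `D₂ \ D₁`, and `D₁`, `D₂` have the same out-degrees). So the underlying
graph of `D₁ \ D₂` is a forest without leaves, hence empty. An α-orientation is therefore
determined by its restriction to the `m - |E(H)|` edges outside `H`; for a spanning tree `H`
this leaves `m - n + 1` edges.
-/

open SimpleGraph Finset

theorem SimpleGraph.IsAcyclic.eq_bot_of_forall_adj_exists_adj_ne_s1 {V : Type*} [Finite V]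
    {G : SimpleGraph V} (hG : G.IsAcyclic)
    (h : ∀ v w, G.Adj v w → ∃ u, G.Adj v u ∧ u ≠ w) : G = ⊥ := by
  by_contra hne
  obtain ⟨a, b, hab⟩ := ne_bot_iff_exists_adj.mp hne
  have : Nonempty V := ⟨a⟩
  obtain ⟨u, v, p, hp, hlongest⟩ := Walk.exists_isPath_forall_isPath_length_le_length G
  have hp_nil : ¬p.Nil := by
    rw [← Walk.length_eq_zero_iff]
    exact Nat.one_le_iff_ne_zero.mp (hlongest _ _ _ (Walk.IsPath.of_adj hab))
  obtain ⟨w, huw, hw⟩ := h u p.snd (p.adj_snd hp_nil)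
  have hw_notin : w ∉ p.support := fun hmem => hw (hG.eq_snd_of_adj_start hp huw hmem)
  have := hlongest _ _ _ (hp.cons hw_notin (h := huw.symm))
  simp at this

theorem Finset.eq_empty_of_isAcyclic_fromRel {V : Type*} [Finite V] [DecidableEq V]
    {R : Finset (V × V)} (hanti : ∀ p ∈ R, p.swap ∉ R)
    (hbal : ∀ v, outD R v = #{p ∈ R | p.2 = v})
    (hac : (fromRel fun a b => (a, b) ∈ R).IsAcyclic) : R = ∅ := by
  have hne : ∀ a b, (a, b) ∈ R → a ≠ b := by
    rintro a b hab rfl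
    exact hanti _ hab hab
  have hin : ∀ a b, (a, b) ∈ R → ∃ c, (c, a) ∈ R := by
    intro a b hab
    have hpos : 0 < outD R a := card_pos.mpr ⟨(a, b), by simp [hab]⟩
    rw [hbal] at hpos
    obtain ⟨⟨c, a'⟩, hmem⟩ := card_pos.mp hpos
    obtain ⟨hca, rfl : a' = a⟩ := mem_filter.mp hmem
    exact ⟨c, hca⟩
  have hout : ∀ a b, (a, b) ∈ R → ∃ c, (b, c) ∈ R := by
    intro a b hab
    have hpos : 0 < #{p ∈ R | p.2 = b} := card_pos.mpr ⟨(a, b), by simp [hab]⟩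
    rw [← hbal] at hpos
    obtain ⟨⟨b', c⟩, hmem⟩ := card_pos.mp hpos
    obtain ⟨hbc, rfl : b' = b⟩ := mem_filter.mp hmem
    exact ⟨c, hbc⟩
  have hbot := hac.eq_bot_of_forall_adj_exists_adj_ne_s1 <| by
    rintro v w ⟨-, hvw | hwv⟩
    · obtain ⟨u, hu⟩ := hin v w hvw
      exact ⟨u, ⟨(hne _ _ hu).symm, Or.inr hu⟩, by rintro rfl; exact hanti _ hvw hu⟩
    · obtain ⟨u, hu⟩ := hout w v hwv
      exact ⟨u, ⟨hne _ _ hu, Or.inl hu⟩, by rintro rfl; exact hanti _ hwv hu⟩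
  refine eq_empty_of_forall_notMem fun ⟨a, b⟩ hab => ?_
  have hadj : (fromRel fun a b => (a, b) ∈ R).Adj a b := ⟨hne a b hab, Or.inl hab⟩
  simp [hbot] at hadj

theorem outD_sdiff_comm {V : Type*} [DecidableEq V] {D₁ D₂ : Finset (V × V)} {v : V}
    (h : outD D₁ v = outD D₂ v) : outD (D₁ \ D₂) v = outD (D₂ \ D₁) v := by
  have filter_sdiff : ∀ A B : Finset (V × V),
      {p ∈ A \ B | p.1 = v} = {p ∈ A | p.1 = v} \ {p ∈ B | p.1 = v} := by
    intro A B; ext; simp only [mem_filter, mem_sdiff]; tauto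
  unfold outD at h ⊢
  rw [filter_sdiff, filter_sdiff, card_sdiff, card_sdiff, inter_comm, h]

namespace IsOrient

variable {V : Type*} {G : SimpleGraph V} {D D₁ D₂ : Finset (V × V)}

theorem swap_notMem (h : IsOrient G D) {p : V × V} (hp : p ∈ D) : p.swap ∉ D :=
  (h.2 _ _ (h.1 p hp)).mp hp

theorem swap_mem_sdiff_s1 [DecidableEq V] (h₁ : IsOrient G D₁) (h₂ : IsOrient G D₂) {p : V × V}
    (hp : p ∈ D₂ \ D₁) : p.swap ∈ D₁ \ D₂ := by
  obtain ⟨hp₂, hp₁⟩ := mem_sdiff.mp hp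
  exact mem_sdiff.mpr ⟨not_not.mp (mt (h₁.2 _ _ (h₂.1 p hp₂)).mpr hp₁), h₂.swap_notMem hp₂⟩

theorem outD_sdiff_eq_card_snd [DecidableEq V] (h₁ : IsOrient G D₁) (h₂ : IsOrient G D₂)
    {v : V} (h : outD D₁ v = outD D₂ v) : outD (D₁ \ D₂) v = #{p ∈ D₁ \ D₂ | p.2 = v} := by
  rw [outD_sdiff_comm h]
  refine card_nbij' Prod.swap Prod.swap ?_ ?_ (fun p _ => p.swap_swap) (fun p _ => p.swap_swap)
  · intro p hp
    simp only [coe_filter, Set.mem_ofPred_eq] at hp ⊢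
    exact ⟨h₁.swap_mem_sdiff_s1 h₂ hp.1, hp.2⟩
  · intro p hp
    simp only [coe_filter, Set.mem_ofPred_eq] at hp ⊢
    exact ⟨h₂.swap_mem_sdiff_s1 h₁ hp.1, hp.2⟩

variable {H : SimpleGraph V}

theorem sdiff_eq_empty_of_isAcyclic [Finite V] [DecidableEq V] (hH : H.IsAcyclic)
    (h₁ : IsOrient G D₁) (h₂ : IsOrient G D₂) (hout : ∀ v, outD D₁ v = outD D₂ v)
    (hagree : ∀ a b, G.Adj a b → ¬H.Adj a b → ((a, b) ∈ D₁ ↔ (a, b) ∈ D₂)) :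
    D₁ \ D₂ = ∅ := by
  have hH_adj : ∀ a b, (a, b) ∈ D₁ \ D₂ → H.Adj a b := by
    intro a b hab
    obtain ⟨hab₁, hab₂⟩ := mem_sdiff.mp hab
    by_contra hH_ab
    exact hab₂ ((hagree a b (h₁.1 _ hab₁) hH_ab).mp hab₁)
  refine eq_empty_of_isAcyclic_fromRel ?_ (fun v => h₁.outD_sdiff_eq_card_snd h₂ (hout v)) ?_
  · exact fun p hp hswap => h₁.swap_notMem (mem_sdiff.mp hp).1 (mem_sdiff.mp hswap).1
  · refine hH.anti fun a b => ?_
    rintro ⟨-, hab | hba⟩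
    exacts [hH_adj a b hab, (hH_adj b a hba).symm]

theorem eq_of_outD_eq_of_isAcyclic [Finite V] [DecidableEq V] (hH : H.IsAcyclic)
    (h₁ : IsOrient G D₁) (h₂ : IsOrient G D₂) (hout : ∀ v, outD D₁ v = outD D₂ v)
    (hagree : ∀ a b, G.Adj a b → ¬H.Adj a b → ((a, b) ∈ D₁ ↔ (a, b) ∈ D₂)) : D₁ = D₂ :=
  Subset.antisymm (sdiff_eq_empty_iff_subset.mp (sdiff_eq_empty_of_isAcyclic hH h₁ h₂ hout hagree))
    (sdiff_eq_empty_iff_subset.mp (sdiff_eq_empty_of_isAcyclic hH h₂ h₁ (fun v => (hout v).symm)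
      fun a b hab hH_ab => (hagree a b hab hH_ab).symm))

theorem mem_iff_mem_of_out_mem_iff_s1 (h₁ : IsOrient G D₁) (h₂ : IsOrient G D₂) {a b : V}
    (hab : G.Adj a b) (h : s(a, b).out ∈ D₁ ↔ s(a, b).out ∈ D₂) :
    (a, b) ∈ D₁ ↔ (a, b) ∈ D₂ := by
  have hrep : s(s(a, b).out.1, s(a, b).out.2) = s(a, b) := Quot.out_eq _
  rcases (Sym2.mk_eq_mk_iff (q := (a, b))).mp hrep with hout | hout <;> rw [hout] at h
  · exact h
  · rw [h₁.2 a b hab, h₂.2 a b hab]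
    exact not_congr h

end IsOrient

theorem ncard_alphaOrientations_le_of_isAcyclic {V : Type*} [Fintype V] [DecidableEq V]
    {G H : SimpleGraph V} [DecidableRel G.Adj] [DecidableRel H.Adj] (hHG : H ≤ G)
    (hH : H.IsAcyclic) (α : V → ℕ) :
    {D : Finset (V × V) | IsOrient G D ∧ ∀ v, outD D v = α v}.ncard ≤
      2 ^ (#G.edgeFinset - #H.edgeFinset) := by
  set F := G.edgeFinset \ H.edgeFinset
  have hinj : Set.InjOn (fun D => {e ∈ F | e.out ∈ D})
      {D : Finset (V × V) | IsOrient G D ∧ ∀ v, outD D v = α v} := by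
    rintro D₁ ⟨h₁, hα₁⟩ D₂ ⟨h₂, hα₂⟩ hD
    refine h₁.eq_of_outD_eq_of_isAcyclic hH h₂ (fun v => (hα₁ v).trans (hα₂ v).symm) fun a b hab hH_ab => ?_
    have heF : s(a, b) ∈ F := by simpa [F] using ⟨hab, hH_ab⟩
    refine h₁.mem_iff_mem_of_out_mem_iff_s1 h₂ hab ?_
    simpa [heF] using congrArg (s(a, b) ∈ ·) hD
  calc _ ≤ (F.powerset : Set (Finset (Sym2 V))).ncard :=
        Set.ncard_le_ncard_of_injOn _
          (fun _ _ => mem_coe.mpr (mem_powerset.mpr (filter_subset _ _))) hinj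
    _ = 2 ^ (#G.edgeFinset - #H.edgeFinset) := by
      rw [Set.ncard_coe_finset, card_powerset, card_sdiff_of_subset (edgeFinset_mono hHG)]

/-- A connected simple graph on `n` vertices with `m` edges has at most
`2 ^ (m - n + 1)` `α`-orientations. -/
theorem alpha_orientations_le_of_connected
    {V : Type*} [Fintype V] [DecidableEq V]
    (G : SimpleGraph V) [DecidableRel G.Adj] (α : V → ℕ)
    (hconn : G.Connected) :
    {D : Finset (V × V) | IsOrient G D ∧ ∀ v, outD D v = α v}.ncard ≤
      2 ^ (G.edgeFinset.card - Fintype.card V + 1) := by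
  classical
  obtain ⟨T, hTG, hT⟩ := hconn.exists_isTree_le
  have hT_card : #T.edgeFinset + 1 = Fintype.card V := hT.card_edgeFinset
  calc _ ≤ 2 ^ (#G.edgeFinset - #T.edgeFinset) :=
        ncard_alphaOrientations_le_of_isAcyclic hTG hT.isAcyclic α
    _ ≤ _ := Nat.pow_le_pow_right two_pos (by omega)
end

section
/- Define sequences (x_k), (y_k) by x₀ = y₀ = 1, x_{k+1} = 4x_k + 2y_k, and y_{k+1} = 4x_k + 3y_k. Then for all k, x_k / y_k > (1 + √33)/8, and consequently all terms of the sequence x_k/y_k are pairwise distinct. -/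
/-- For the sequences defined by `x₀ = y₀ = 1`, `x_{k+1} = 4x_k + 2y_k`,
`y_{k+1} = 4x_k + 3y_k`, all ratios `x_k / y_k` exceed `(1 + √33)/8` and
consequently the ratios are pairwise distinct. -/
theorem ratio_gt_root_and_injective (x y : ℕ → ℝ)
    (hx0 : x 0 = 1) (hy0 : y 0 = 1)
    (hx : ∀ k, x (k + 1) = 4 * x k + 2 * y k)
    (hy : ∀ k, y (k + 1) = 4 * x k + 3 * y k) :
    (∀ k, (1 + Real.sqrt 33) / 8 < x k / y k) ∧
      Function.Injective (fun k : ℕ => x k / y k) := by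
  set s := Real.sqrt 33 with hs
  have hs2 : s ^ 2 = 33 := Real.sq_sqrt (by norm_num)
  have hs0 : 0 ≤ s := Real.sqrt_nonneg _
  have hs7 : s < 7 := by nlinarith
  have hs3 : 3 < s := by nlinarith
  set c := (1 + s) / 8 with hc
  have hc2 : 4 * c ^ 2 = c + 2 := by rw [hc]; nlinarith
  have hc0 : 0 < c := by rw [hc]; linarith
  have hc1 : c < 1 := by rw [hc]; linarith
  have hch : 1 / 2 < c := by rw [hc]; linarith
  have key : ∀ k, 0 < y k ∧ c * y k < x k := by
    intro k
    induction k with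
    | zero =>
      rw [hx0, hy0]
      exact ⟨by norm_num, by rw [mul_one]; linarith⟩
    | succ n ih =>
      obtain ⟨hyp, hxc⟩ := ih
      have hxp : 0 < x n := lt_trans (by positivity) hxc
      refine ⟨?_, ?_⟩
      · rw [hy n]; nlinarith
      · rw [hx n, hy n]
        nlinarith [mul_pos (sub_pos.mpr hc1) (sub_pos.mpr hxc)]
  have hrat : ∀ k, c < x k / y k := by
    intro k
    obtain ⟨hyp, hxc⟩ := key k
    exact (lt_div_iff₀ hyp).mpr hxc
  refine ⟨hrat, ?_⟩
  have hdec : StrictAnti (fun k : ℕ => x k / y k) := by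
    apply strictAnti_nat_of_succ_lt
    intro n
    obtain ⟨hyp, hxc⟩ := key n
    obtain ⟨hyp', _⟩ := key (n + 1)
    have hxp : 0 < x n := lt_trans (by positivity) hxc
    rw [div_lt_div_iff₀ hyp' hyp, hx n, hy n]
    nlinarith [mul_pos (sub_pos.mpr hxc) (by nlinarith : (0:ℝ) < 4 * x n + (4 * c - 1) * y n), hc2, mul_pos hyp hyp]
  exact hdec.injective
end

section
/- Let r_n(i) denote the number of 0-1 sequences of length n with no two consecutive 1s whose i-th entry equals 1 (with 1 ≤ i ≤ n). Then r_n(i) = F_i · F_{n+1−i}. -/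
/-- A 0-1 sequence of length `n` is sparse if it has no two consecutive 1s. -/
def Sparse {n : ℕ} (a : Fin n → Bool) : Prop :=
  ∀ (i : ℕ) (h1 : i < n) (h2 : i + 1 < n), ¬(a ⟨i, h1⟩ = true ∧ a ⟨i + 1, h2⟩ = true)

/-- Splitting a sparse sequence of length `m+2` by its last entry. -/
def sparseSplit (m : ℕ) :
    {a : Fin (m + 2) → Bool // Sparse a} ≃
      {a : Fin (m + 1) → Bool // Sparse a} ⊕ {a : Fin m → Bool // Sparse a} where
  toFun a :=
    if h : a.1 ⟨m + 1, by omega⟩ = true then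
      Sum.inr ⟨fun k => a.1 ⟨k, by omega⟩, by
        intro i h1 h2 hc
        exact a.2 i (by omega) (by omega) hc⟩
    else
      Sum.inl ⟨fun k => a.1 ⟨k, by omega⟩, by
        intro i h1 h2 hc
        exact a.2 i (by omega) (by omega) hc⟩
  invFun x :=
    match x with
    | Sum.inl b => ⟨fun k => if h : (k : ℕ) < m + 1 then b.1 ⟨k, h⟩ else false, by
        intro i h1 h2 hc
        by_cases hi : i + 1 < m + 1
        · simp only [dif_pos hi, dif_pos (by omega : i < m + 1)] at hc
          exact b.2 i (by omega) hi hc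
        · simp only [dif_neg hi] at hc
          exact absurd hc.2 (by simp)⟩
    | Sum.inr c => ⟨fun k => if h : (k : ℕ) < m then c.1 ⟨k, h⟩
        else if (k : ℕ) = m + 1 then true else false, by
        intro i h1 h2 hc
        by_cases hi : i + 1 < m
        · simp only [dif_pos hi, dif_pos (by omega : i < m)] at hc
          exact c.2 i (by omega) hi hc
        · by_cases hi2 : i < m
          · -- i + 1 = m, so entry i+1 is false
            simp only [dif_neg hi, if_neg (by omega : ¬ i + 1 = m + 1)] at hc
            exact absurd hc.2 (by simp)
          · -- i ≥ m; then i = m (entry false) since i+1 < m+2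
            simp only [dif_neg hi2, if_neg (by omega : ¬ i = m + 1)] at hc
            exact absurd hc.1 (by simp)⟩
  left_inv a := by
    by_cases h : a.1 ⟨m + 1, by omega⟩ = true
    · have hm : a.1 ⟨m, by omega⟩ = false := by
        by_contra hm
        exact a.2 m (by omega) (by omega) ⟨by simpa using hm, h⟩
      simp only [dif_pos h]
      ext k
      rcases k with ⟨k, hk⟩
      by_cases h1 : k < m
      · simp [h1]
      · by_cases h2 : k = m + 1
        · subst h2; simp [h1, h]
        · have : k = m := by omega
          subst this
          simp [h1, h2, hm]
    · simp only [dif_neg h]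
      ext k
      rcases k with ⟨k, hk⟩
      by_cases h1 : k < m + 1
      · simp [h1]
      · have : k = m + 1 := by omega
        subst this
        simp only [dif_neg h1]
        exact (Bool.not_eq_true _).mp h |>.symm
  right_inv x := by
    match x with
    | Sum.inl b =>
      simp only [dif_neg (by omega : ¬ (m + 1 : ℕ) < m + 1)]
      rw [dif_neg (by simp)]
      congr 1
      ext k
      rcases k with ⟨k, hk⟩
      simp [hk]
    | Sum.inr c =>
      dsimp only
      rw [dif_pos (by simp [show ¬ (m + 1 : ℕ) < m by omega])]
      congr 1
      ext k
      rcases k with ⟨k, hk⟩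
      simp [hk]

theorem card_sparse (m : ℕ) :
    Nat.card {a : Fin m → Bool // Sparse a} = Nat.fib (m + 2) := by
  induction m using Nat.strong_induction_on with
  | _ m ih =>
    match m with
    | 0 =>
      have : Nat.card {a : Fin 0 → Bool // Sparse a} = 1 := by
        rw [Nat.card_eq_one_iff_unique]
        constructor
        · constructor
          intro a b
          ext k
          exact absurd k.2 (by omega)
        · exact ⟨⟨fun k => false, by intro i h1 h2; omega⟩⟩
      simp [this]
    | 1 =>
      have e : {a : Fin 1 → Bool // Sparse a} ≃ Bool := by
        refine (Equiv.subtypeUnivEquiv ?_).trans (Equiv.funUnique (Fin 1) Bool)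
        intro a i h1 h2
        omega
      rw [Nat.card_congr e]
      simp [Nat.card_eq_fintype_card]
      decide
    | (m + 2) =>
      rw [Nat.card_congr (sparseSplit m), Nat.card_sum, ih (m + 1) (by omega),
        ih m (by omega)]
      rw [show m + 2 + 2 = (m + 2) + 2 from rfl, ]
      conv_rhs => rw [Nat.fib_add_two]
      exact Nat.add_comm _ _

/-- Splitting a sparse sequence with a 1 at position `j` into the part before
`j - 1` and the part after `j + 1`. -/
def sparseAt (n : ℕ) (j : Fin n) :
    {a : Fin n → Bool // Sparse a ∧ a j = true} ≃
      {b : Fin ((j : ℕ) - 1) → Bool // Sparse b} ×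
        {c : Fin (n - (j : ℕ) - 2) → Bool // Sparse c} where
  toFun a :=
    (⟨fun k => a.1 ⟨k, by have := k.2; have := j.2; omega⟩, by
        intro i h1 h2 hc
        exact a.2.1 i (by have := j.2; omega) (by have := j.2; omega) hc⟩,
     ⟨fun k => a.1 ⟨(j : ℕ) + 2 + k, by have := k.2; omega⟩, by
        intro i h1 h2 hc
        exact a.2.1 ((j : ℕ) + 2 + i) (by omega) (by omega) hc⟩)
  invFun x :=
    ⟨fun m => if h : (m : ℕ) < (j : ℕ) - 1 then x.1.1 ⟨m, h⟩
      else if (m : ℕ) = (j : ℕ) then true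
      else if h2 : (j : ℕ) + 2 ≤ (m : ℕ) then
        x.2.1 ⟨(m : ℕ) - ((j : ℕ) + 2), by have := m.2; omega⟩
      else false, by
      constructor
      · intro i h1 h2 hc
        dsimp only at hc
        by_cases hA : i + 1 < (j : ℕ) - 1
        · rw [dif_pos hA, dif_pos (by omega : i < (j : ℕ) - 1)] at hc
          exact x.1.2 i (by omega) hA hc
        · by_cases hB : (j : ℕ) + 2 ≤ i
          · rw [dif_neg (by omega : ¬ i < (j : ℕ) - 1),
              if_neg (by omega : ¬ i = (j : ℕ)), dif_pos hB,
              dif_neg (by omega : ¬ i + 1 < (j : ℕ) - 1),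
              if_neg (by omega : ¬ i + 1 = (j : ℕ)),
              dif_pos (by omega : (j : ℕ) + 2 ≤ i + 1)] at hc
            have hfix : (⟨i + 1 - ((j : ℕ) + 2), by omega⟩ :
                Fin (n - (j : ℕ) - 2)) = ⟨i - ((j : ℕ) + 2) + 1, by omega⟩ :=
              Fin.ext (by show i + 1 - ((j : ℕ) + 2) = i - ((j : ℕ) + 2) + 1; omega)
            rw [hfix] at hc
            exact x.2.2 (i - ((j : ℕ) + 2)) (by omega) (by omega) hc
          · rcases (by omega :
                (i + 1 = (j : ℕ) - 1 ∧ 2 ≤ (j : ℕ)) ∨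
                (i + 1 = (j : ℕ) ∧ 1 ≤ (j : ℕ)) ∨ i = (j : ℕ) ∨ i = (j : ℕ) + 1)
              with h | h | h | h
            · rw [dif_neg (by omega : ¬ i + 1 < (j : ℕ) - 1),
                if_neg (by omega : ¬ i + 1 = (j : ℕ)),
                dif_neg (by omega : ¬ (j : ℕ) + 2 ≤ i + 1)] at hc
              exact absurd hc.2 (by simp)
            · rw [dif_neg (by omega : ¬ i < (j : ℕ) - 1),
                if_neg (by omega : ¬ i = (j : ℕ)),
                dif_neg (by omega : ¬ (j : ℕ) + 2 ≤ i)] at hc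
              exact absurd hc.1 (by simp)
            · rw [dif_neg (by omega : ¬ i + 1 < (j : ℕ) - 1),
                if_neg (by omega : ¬ i + 1 = (j : ℕ)),
                dif_neg (by omega : ¬ (j : ℕ) + 2 ≤ i + 1)] at hc
              exact absurd hc.2 (by simp)
            · rw [dif_neg (by omega : ¬ i < (j : ℕ) - 1),
                if_neg (by omega : ¬ i = (j : ℕ)),
                dif_neg (by omega : ¬ (j : ℕ) + 2 ≤ i)] at hc
              exact absurd hc.1 (by simp)
      · dsimp only
        rw [dif_neg (by omega : ¬ (j : ℕ) < (j : ℕ) - 1), if_pos rfl]⟩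
  left_inv a := by
    apply Subtype.ext
    funext k
    rcases k with ⟨k, hk⟩
    dsimp only
    by_cases h1 : k < (j : ℕ) - 1
    · rw [dif_pos h1]
    · by_cases h2 : k = (j : ℕ)
      · rw [dif_neg h1, if_pos h2]
        have e : a.1 j = a.1 ⟨k, hk⟩ :=
          congrArg a.1 (Fin.ext (by show (j : ℕ) = k; omega))
        rw [← e, a.2.2]
      · by_cases h3 : (j : ℕ) + 2 ≤ k
        · rw [dif_neg h1, if_neg h2, dif_pos h3]
          exact congrArg a.1 (Fin.ext (by show (j : ℕ) + 2 + (k - ((j : ℕ) + 2)) = k; omega))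
        · rw [dif_neg h1, if_neg h2, dif_neg h3]
          symm
          -- here k = j - 1 (with j ≥ 1) or k = j + 1
          rcases (by omega : (k + 1 = (j : ℕ)) ∨ k = (j : ℕ) + 1) with h | h
          · have hs := a.2.1 k hk (by have := j.2; omega)
            have hkj : a.1 ⟨k + 1, by have := j.2; omega⟩ = true := by
              have e : a.1 j = a.1 ⟨k + 1, by have := j.2; omega⟩ :=
                congrArg a.1 (Fin.ext (by show (j : ℕ) = k + 1; omega))
              rw [← e]; exact a.2.2
            by_contra hcon
            exact hs ⟨by simpa using hcon, hkj⟩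
          · have hs := a.2.1 (j : ℕ) (j.2) (by omega)
            have hj1 : a.1 ⟨(j : ℕ), j.2⟩ = true := a.2.2
            by_contra hcon
            refine hs ⟨hj1, ?_⟩
            have : a.1 ⟨(j : ℕ) + 1, by omega⟩ = a.1 ⟨k, hk⟩ :=
              congrArg a.1 (Fin.ext (by show (j : ℕ) + 1 = k; omega))
            rw [this]
            simpa using hcon
  right_inv x := by
    rcases x with ⟨b, c⟩
    dsimp only
    refine Prod.ext ?_ ?_
    · apply Subtype.ext
      funext k
      dsimp only
      rw [dif_pos k.2]
    · apply Subtype.ext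
      funext k
      dsimp only
      rw [dif_neg (by have := k.2; omega : ¬ (j : ℕ) + 2 + (k : ℕ) < (j : ℕ) - 1),
        if_neg (by omega : ¬ (j : ℕ) + 2 + (k : ℕ) = (j : ℕ)),
        dif_pos (by omega : (j : ℕ) + 2 ≤ (j : ℕ) + 2 + (k : ℕ))]
      exact congrArg c.1 (Fin.ext (by show (j : ℕ) + 2 + (k : ℕ) - ((j : ℕ) + 2) = (k : ℕ); omega))

/-- The number of sparse 0-1 sequences of length `n` whose entry at (0-indexed)
position `i`, i.e. 1-indexed position `i+1`, equals 1 is `F_{i+1} · F_{n-i}`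
(which is `F_j · F_{n+1-j}` for the 1-indexed position `j = i+1`). -/
theorem card_sparse_with_one_at (n : ℕ) (i : Fin n) :
    Nat.card {a : Fin n → Bool // Sparse a ∧ a i = true} =
      Nat.fib ((i : ℕ) + 1) * Nat.fib (n - (i : ℕ)) := by
  rw [Nat.card_congr (sparseAt n i), Nat.card_prod, card_sparse, card_sparse]
  have h1 : Nat.fib ((i : ℕ) - 1 + 2) = Nat.fib ((i : ℕ) + 1) := by
    rcases Nat.eq_zero_or_pos (i : ℕ) with h | h
    · rw [h]; decide
    · congr 1; omega
  have h2 : Nat.fib (n - (i : ℕ) - 2 + 2) = Nat.fib (n - (i : ℕ)) := by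
    rcases le_or_gt ((i : ℕ) + 2) n with h | h
    · congr 1; omega
    · have hn : n - (i : ℕ) = 1 := by have := i.2; omega
      rw [hn]; decide
  rw [h1, h2]
end

section
/- For sparse 0-1 sequences of length n (no two consecutive 1s), the total number of 1s summed over all such sequences satisfies ∑_{i=1}^{n} r_n(i) = (1/5)·(2(n+1)·F_n + n·F_{n+1}), where r_n(i) = F_i·F_{n+1−i} is the number of sparse sequences with a 1 in position i. Equivalently, 5·∑_{i=1}^{n} F_i·F_{n+1−i} = 2(n+1)·F_n + n·F_{n+1}. -/
open Finset

lemma sum_fib_rec (n : ℕ) :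
    ∑ i ∈ Finset.Icc 1 (n + 2), Nat.fib i * Nat.fib (n + 3 - i) =
      (∑ i ∈ Finset.Icc 1 (n + 1), Nat.fib i * Nat.fib (n + 2 - i)) +
      (∑ i ∈ Finset.Icc 1 n, Nat.fib i * Nat.fib (n + 1 - i)) + Nat.fib (n + 2) := by
  rw [show n + 2 = (n + 1) + 1 from rfl, Finset.sum_Icc_succ_top (by omega)]
  have h1 : ∀ i ∈ Finset.Icc 1 (n + 1),
      Nat.fib i * Nat.fib (n + 3 - i) =
        Nat.fib i * Nat.fib (n + 2 - i) + Nat.fib i * Nat.fib (n + 1 - i) := by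
    intro i hi
    simp only [Finset.mem_Icc] at hi
    have e3 : n + 3 - i = (n + 1 - i) + 2 := by omega
    have e2 : n + 2 - i = (n + 1 - i) + 1 := by omega
    rw [e3, e2, Nat.fib_add_two, Nat.mul_add]; ring
  rw [Finset.sum_congr rfl h1, Finset.sum_add_distrib]
  have h2 : ∑ i ∈ Finset.Icc 1 (n + 1), Nat.fib i * Nat.fib (n + 1 - i) =
      ∑ i ∈ Finset.Icc 1 n, Nat.fib i * Nat.fib (n + 1 - i) := by
    rw [show n + 1 = n + 1 from rfl, Finset.sum_Icc_succ_top (by omega)]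
    simp
  rw [h2]
  simp [Nat.fib_one]

/-- Summing `r_n(i) = F_i · F_{n+1-i}` over all positions `1 ≤ i ≤ n`:
`5 · ∑_{i=1}^{n} F_i · F_{n+1-i} = 2(n+1) · F_n + n · F_{n+1}`. -/
theorem sum_fib_mul_fib (n : ℕ) :
    5 * ∑ i ∈ Finset.Icc 1 n, Nat.fib i * Nat.fib (n + 1 - i) =
      2 * (n + 1) * Nat.fib n + n * Nat.fib (n + 1) := by
  induction n using Nat.twoStepInduction with
  | zero => simp
  | one => simp [Finset.Icc_self]
  | more n ih1 ih2 =>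
    have hr := sum_fib_rec n
    set A := ∑ i ∈ Finset.Icc 1 (n + 1), Nat.fib i * Nat.fib (n + 2 - i) with hA
    set B := ∑ i ∈ Finset.Icc 1 n, Nat.fib i * Nat.fib (n + 1 - i) with hB
    rw [show n + 2 + 1 = n + 3 from rfl, hr]
    have f2 : Nat.fib (n + 2) = Nat.fib n + Nat.fib (n + 1) := Nat.fib_add_two
    have f3 : Nat.fib (n + 3) = Nat.fib (n + 1) + Nat.fib (n + 2) :=
      Nat.fib_add_two (n := n + 1)
    calc 5 * (A + B + Nat.fib (n + 2)) = 5 * A + 5 * B + 5 * Nat.fib (n + 2) := by ring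
      _ = (2 * (n + 1 + 1) * Nat.fib (n + 1) + (n + 1) * Nat.fib (n + 1 + 1))
            + (2 * (n + 1) * Nat.fib n + n * Nat.fib (n + 1)) + 5 * Nat.fib (n + 2) := by
          rw [ih2, ih1]
      _ = 2 * (n + 2 + 1) * Nat.fib (n + 2) + (n + 2) * Nat.fib (n + 3) := by
          rw [f3, f2]; ring
end

section
/- The ratio of the expected number of 1s per position in a random sparse sequence tends to 1/(√5·φ): lim_{n→∞} (∑_{i=1}^{n} F_i·F_{n+1−i}) / (n·F_{n+2}) = 1/(√5·φ), where φ = (1+√5)/2. -/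
open Filter

/-!
The convolution `S n = ∑_{i=1}^{n} F_i F_{n+1-i}` satisfies `S (n+2) = S (n+1) + S n + F_{n+2}`,
which yields the closed form `5 S n + F_{n+1} = (n+1) (F_n + F_{n+2})`. Dividing by `n F_{n+2}`,
the ratio tends to `(1 + ψ²)/5 = 1/(√5 φ)` because `F_n / F_{n+1} → -ψ = φ⁻¹`.
-/

open Finset Real
open Nat (fib fib_add_two fib_pos)
open scoped Topology goldenRatio

def fibConv (n : ℕ) : ℕ := ∑ i ∈ Icc 1 n, fib i * fib (n + 1 - i)

theorem fibConv_add_two (n : ℕ) :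
    fibConv (n + 2) = fibConv (n + 1) + fibConv n + fib (n + 2) := by
  have hsplit : ∀ i ∈ Icc 1 (n + 1), fib i * fib (n + 2 + 1 - i) =
      fib i * fib (n + 1 + 1 - i) + fib i * fib (n + 1 - i) := by
    intro i hi
    rw [show n + 2 + 1 - i = n + 1 - i + 2 by grind,
      show n + 1 + 1 - i = n + 1 - i + 1 by grind, fib_add_two]
    ring
  rw [fibConv, sum_Icc_succ_top (by omega), sum_congr rfl hsplit, sum_add_distrib,
    sum_Icc_succ_top (b := n) (f := fun i ↦ fib i * fib (n + 1 - i)) (by omega)]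
  simp [fibConv]

theorem five_mul_fibConv_add_fib_succ (n : ℕ) :
    5 * fibConv n + fib (n + 1) = (n + 1) * (fib n + fib (n + 2)) := by
  induction n using Nat.twoStepInduction with
  | zero => simp [fibConv]
  | one => rfl
  | more n ih₀ ih₁ =>
    have h₂ := fib_add_two (n := n)
    have h₃ := fib_add_two (n := n + 1)
    have h₄ := fib_add_two (n := n + 2)
    rw [fibConv_add_two]
    grind

theorem fibConv_div_eq {n : ℕ} (hn : n ≠ 0) :
    (fibConv n / (n * fib (n + 2)) : ℝ) =
      ((1 + (n : ℝ)⁻¹) * (fib n / fib (n + 2) + 1) -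
        (n : ℝ)⁻¹ * (fib (n + 1) / fib (n + 2))) / 5 := by
  have hF : (fib (n + 2) : ℝ) ≠ 0 := by exact_mod_cast (fib_pos.2 (by omega)).ne'
  have h : (5 * fibConv n + fib (n + 1) : ℝ) = (n + 1) * (fib n + fib (n + 2)) := by
    exact_mod_cast five_mul_fibConv_add_fib_succ n
  field_simp
  linear_combination h

theorem tendsto_fib_div_fib_add_two_atTop :
    Tendsto (fun n ↦ (fib n / fib (n + 2) : ℝ)) atTop (𝓝 (ψ ^ 2)) := by
  have h := tendsto_fib_div_fib_succ_atTop.mul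
    (tendsto_fib_div_fib_succ_atTop.comp (tendsto_add_atTop_nat 1))
  rw [neg_mul_neg, ← sq] at h
  refine h.congr fun n ↦ div_mul_div_cancel₀ ?_
  exact_mod_cast (fib_pos.2 n.succ_pos).ne'

theorem goldenConj_sq_add_one_div_five : (ψ ^ 2 + 1) / 5 = 1 / (√5 * φ) := by
  have h5 : √5 ^ 2 = 5 := sq_sqrt (by norm_num)
  field_simp
  nlinarith

/-- The expected proportion of 1s in a random sparse sequence:
`(∑_{i=1}^{n} F_i · F_{n+1-i}) / (n · F_{n+2}) → 1/(√5 · φ)` as `n → ∞`,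
where `φ = (1+√5)/2` is the golden ratio. -/
theorem tendsto_sum_fib_div :
    Tendsto
      (fun n : ℕ =>
        (∑ i ∈ Finset.Icc 1 n, (Nat.fib i * Nat.fib (n + 1 - i) : ℝ)) /
          (n * Nat.fib (n + 2)))
      atTop (nhds (1 / (Real.sqrt 5 * ((1 + Real.sqrt 5) / 2)))) := by
  have hinv : Tendsto (fun n : ℕ ↦ (n : ℝ)⁻¹) atTop (𝓝 0) := tendsto_inv_atTop_nhds_zero_nat
  have h := ((((tendsto_const_nhds (x := 1)).add hinv).mul
    (tendsto_fib_div_fib_add_two_atTop.add (tendsto_const_nhds (x := 1)))).sub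
    (hinv.mul (tendsto_fib_div_fib_succ_atTop.comp (tendsto_add_atTop_nat 1)))).div_const 5
  rw [add_zero, one_mul, zero_mul, sub_zero, goldenConj_sq_add_one_div_five] at h
  refine h.congr' ?_
  filter_upwards [eventually_ne_atTop 0] with n hn
  rw [Function.comp_apply, ← fibConv_div_eq hn, fibConv]
  push_cast
  rfl
end

section
/- Let d : V → ℕ be the degree function of a simple planar graph on a finite vertex set with n′ = |V′| ≥ 1 vertices in V′ = V ∖ {s,t}, and suppose ∑_{v∈V′} d(v) ≤ 6n′. Then ∏_{v∈V′} (1 − 2^{1−d(v)}) ≤ (31/32)^{n′}. -/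
/-!
Write `1 - 2^{1-d v} = 1 - 2·(1/2)^{d v}`. By AM-GM the product is at most the `n`-th power
of the mean of its factors, and by Jensen for the convex function `x ↦ (1/2)^x` the mean of
`(1/2)^{d v}` is at least `(1/2)^6`, because the mean degree is at most `6`. Hence each mean
factor is at most `1 - 2/64 = 31/32`.
-/

open Finset

namespace Real

variable {ι : Type*} (s : Finset ι)

theorem prod_le_pow_card_of_sum_le {f : ι → ℝ} {c : ℝ} (hf : ∀ i ∈ s, 0 ≤ f i)
    (hc : ∑ i ∈ s, f i ≤ #s * c) : ∏ i ∈ s, f i ≤ c ^ #s := by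
  rcases s.eq_empty_or_nonempty with rfl | hs
  · simp
  have hn : (0 : ℝ) < #s := by exact_mod_cast hs.card_pos
  have hw : ∑ _i ∈ s, (#s : ℝ)⁻¹ = 1 := by simp [hn.ne']
  have amgm := geom_mean_le_arith_mean_weighted s (fun _ ↦ (#s : ℝ)⁻¹) f
    (fun _ _ ↦ by positivity) hw hf
  have hmean : ∑ i ∈ s, (#s : ℝ)⁻¹ * f i ≤ c := by
    rw [← mul_sum, inv_mul_le_iff₀ hn]; exact hc
  calc ∏ i ∈ s, f i = (∏ i ∈ s, f i ^ (#s : ℝ)⁻¹) ^ #s := by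
        rw [← prod_pow]
        refine prod_congr rfl fun i hi ↦ ?_
        rw [← rpow_natCast, ← rpow_mul (hf i hi), inv_mul_cancel₀ hn.ne', rpow_one]
    _ ≤ c ^ #s := pow_le_pow_left₀ (prod_nonneg fun i hi ↦ rpow_nonneg (hf i hi) _)
        (amgm.trans hmean) _

theorem card_mul_rpow_le_sum_rpow_of_sum_le {b c : ℝ} {x : ι → ℝ} (hb₀ : 0 < b) (hb₁ : b ≤ 1)
    (hx : ∑ i ∈ s, x i ≤ #s * c) : #s * b ^ c ≤ ∑ i ∈ s, b ^ x i := by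
  rcases s.eq_empty_or_nonempty with rfl | hs
  · simp
  have hn : (0 : ℝ) < #s := by exact_mod_cast hs.card_pos
  have hw : ∑ _i ∈ s, (#s : ℝ)⁻¹ = 1 := by simp [hn.ne']
  have jensen := (convexOn_rpow_left hb₀).map_sum_le (t := s) (w := fun _ ↦ (#s : ℝ)⁻¹)
    (p := x) (fun _ _ ↦ by positivity) hw fun _ _ ↦ Set.mem_univ _
  simp only [smul_eq_mul, ← mul_sum] at jensen
  have hmean : (#s : ℝ)⁻¹ * ∑ i ∈ s, x i ≤ c := by rw [inv_mul_le_iff₀ hn]; exact hx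
  rw [← le_inv_mul_iff₀ hn]
  exact (rpow_le_rpow_of_exponent_ge hb₀ hb₁ hmean).trans jensen

end Real

theorem prod_one_sub_two_pow_le_general
    {V' : Type*} [Fintype V']
    (d : V' → ℕ) (hd : ∀ v, 1 ≤ d v)
    (hsum : ∑ v : V', d v ≤ 6 * Fintype.card V') :
    ∏ v : V', (1 - (2 : ℝ) ^ ((1 : ℤ) - (d v : ℤ))) ≤
      (31 / 32 : ℝ) ^ (Fintype.card V') := by
  have hterm : ∀ v, (2 : ℝ) ^ ((1 : ℤ) - (d v : ℤ)) = 2 * (1 / 2 : ℝ) ^ (d v : ℝ) := by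
    intro v
    rw [zpow_sub₀ two_ne_zero, Real.rpow_natCast, zpow_one, zpow_natCast, div_pow, one_pow,
      div_eq_mul_one_div]
  have hsumR : ∑ v, (d v : ℝ) ≤ #(univ : Finset V') * 6 := by
    rw [card_univ, mul_comm]; exact_mod_cast hsum
  have hjensen := Real.card_mul_rpow_le_sum_rpow_of_sum_le (b := 1 / 2) univ
    (by norm_num) (by norm_num) hsumR
  rw [← card_univ]
  refine Real.prod_le_pow_card_of_sum_le univ (fun v _ ↦ ?_) ?_
  · have hle : (2 : ℝ) ^ ((1 : ℤ) - (d v : ℤ)) ≤ 1 :=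
      zpow_le_one_of_nonpos₀ one_le_two (by linarith [hd v])
    linarith
  · simp only [hterm, sum_sub_distrib, ← mul_sum, sum_const, nsmul_one] at hjensen ⊢
    norm_num at hjensen ⊢
    linarith

/-- If `d : V′ → ℕ` with `d(v) ≥ 1` for all `v` and `∑ d(v) ≤ 6·|V′|` on a nonempty
finite set `V′`, then `∏_{v ∈ V′} (1 − 2^{1−d(v)}) ≤ (31/32)^{|V′|}`. -/
theorem prod_one_sub_two_pow_le
    {V' : Type*} [Fintype V'] [Nonempty V']
    (d : V' → ℕ) (hd : ∀ v, 1 ≤ d v)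
    (hsum : ∑ v : V', d v ≤ 6 * Fintype.card V') :
    ∏ v : V', (1 - (2 : ℝ) ^ ((1 : ℤ) - (d v : ℤ))) ≤
      (31 / 32 : ℝ) ^ (Fintype.card V') :=
  prod_one_sub_two_pow_le_general d hd hsum
end
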